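/- arXiv:1108.0519 — 2 statements merged into one kernel-verified Lean document; each statement's English description precedes it below -/
import Mathlib

section
/- Newton-polyhedron characterization of tropical zeros: let f be a tropical polynomial in n variables with exponent set S ⊆ ℤ^n and coefficients c : S → ℝ, and let P(f) = convexHull{(c(I), I) : I ∈ S} + {(t, 0, …, 0) : t ≥ 0} ⊆ ℝ^{n+1} be its extended Newton polyhedron. Then x ∈ ℝ^n is a tropical zero of f if and only if the linear functional (z_0, z_1, …, z_n) ↦ z_0 + x_1 z_1 + ⋯ + x_n z_n attains its minimum over P(f) at at least two distinct points of P(f). -/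
/-!
The points `(c I, I)` lie in `P(f)`, and the functional `ℓ_x (z₀, z) = z₀ + ⟨x, z⟩` takes the
value `c I + ⟨I, x⟩` there; being linear, `ℓ_x` is bounded below on the convex hull by the least
such value, and the ray only increases it. So the minimum of `ℓ_x` over `P(f)` is the tropical
minimum, attained at the points `(c I, I)` of the minimizing exponents. Conversely, if a single
exponent `J` is the strict minimizer, then `{(c J, J)} ∪ {ℓ_x > ℓ_x (c J, J)}` is a convex set
containing every `(c I, I)`, hence all of `P(f)`, so `(c J, J)` is the only minimizing point.
-/

open Pointwise

/-- `x ∈ ℝⁿ` is a tropical zero of the tropical polynomial with exponent set `S`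
and coefficients `c` if the minimum `min_{I ∈ S} (c I + ⟨I, x⟩)` is attained for
at least two distinct `I ∈ S`. -/
def IsTropicalZero (n : ℕ) (S : Finset (Fin n → ℤ)) (c : (Fin n → ℤ) → ℝ)
    (x : Fin n → ℝ) : Prop :=
  ∃ I₁ ∈ S, ∃ I₂ ∈ S, I₁ ≠ I₂ ∧
    (∀ I ∈ S, c I₁ + ∑ t, (I₁ t : ℝ) * x t ≤ c I + ∑ t, (I t : ℝ) * x t) ∧
    c I₁ + ∑ t, (I₁ t : ℝ) * x t = c I₂ + ∑ t, (I₂ t : ℝ) * x t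

/-- The extended Newton polyhedron of a tropical polynomial, as a subset of
`ℝ^{n+1} = ℝ × ℝⁿ`: the convex hull of the points `(c I, I)`, `I ∈ S`, plus the
ray `{(t, 0) : t ≥ 0}` in the first coordinate. -/
def NewtonPolyhedron (n : ℕ) (S : Finset (Fin n → ℤ)) (c : (Fin n → ℤ) → ℝ) :
    Set (ℝ × (Fin n → ℝ)) :=
  convexHull ℝ {p | ∃ I ∈ S, p = (c I, fun t => (I t : ℝ))} +
    {q | ∃ t : ℝ, 0 ≤ t ∧ q = (t, 0)}

section LinearFunctional

variable {E : Type*} [AddCommGroup E] [Module ℝ E] (ℓ : E →ₗ[ℝ] ℝ)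

theorem convex_insert_setOf_apply_lt (y : E) : Convex ℝ (insert y {r | ℓ y < ℓ r}) := by
  have hge : ∀ z ∈ insert y {r | ℓ y < ℓ r}, ℓ y ≤ ℓ z := by
    rintro z (rfl | hz)
    exacts [le_rfl, hz.le]
  rw [convex_iff_forall_pos]
  intro a ha b hb μ ν hμ hν hμν
  by_cases hab : a = y ∧ b = y
  · obtain ⟨rfl, rfl⟩ := hab
    exact Or.inl (Convex.combo_self hμν _)
  right
  have hy : ℓ y = μ * ℓ y + ν * ℓ y := by rw [← add_mul, hμν, one_mul]
  simp only [Set.mem_ofPred_eq, map_add, map_smul, smul_eq_mul]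
  rcases not_and_or.1 hab with hay | hby
  · linarith [mul_lt_mul_of_pos_left (ha.resolve_left hay) hμ,
      mul_le_mul_of_nonneg_left (hge b hb) hν.le]
  · linarith [mul_le_mul_of_nonneg_left (hge a ha) hμ.le,
      mul_lt_mul_of_pos_left (hb.resolve_left hby) hν]

variable {s R : Set E}

theorem le_apply_of_mem_convexHull_add {a : ℝ} (hs : ∀ y ∈ s, a ≤ ℓ y)
    (hR : ∀ z ∈ R, 0 ≤ ℓ z) {r : E} (hr : r ∈ convexHull ℝ s + R) : a ≤ ℓ r := by
  obtain ⟨h, hh, z, hz, rfl⟩ := Set.mem_add.1 hr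
  have : a ≤ ℓ h := convexHull_min hs (convex_halfSpace_ge ℓ.isLinear a) hh
  rw [map_add]
  linarith [hR z hz]

theorem eq_of_mem_convexHull_add_of_apply_le {y : E} (hs : ∀ y' ∈ s, y' = y ∨ ℓ y < ℓ y')
    (hR : ∀ z ∈ R, z ≠ 0 → 0 < ℓ z) {r : E} (hr : r ∈ convexHull ℝ s + R)
    (hle : ℓ r ≤ ℓ y) : r = y := by
  obtain ⟨h, hh, z, hz, rfl⟩ := Set.mem_add.1 hr
  have hh' : h = y ∨ ℓ y < ℓ h := convexHull_min hs (convex_insert_setOf_apply_lt ℓ y) hh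
  have hz0 : z = 0 := by
    by_contra hz0
    have := hR z hz hz0
    rcases hh' with rfl | hh' <;> rw [map_add] at hle <;> linarith
  subst hz0
  rw [add_zero] at hle ⊢
  exact hh'.resolve_right hle.not_gt

end LinearFunctional

namespace TropicalPolynomial

variable {n : ℕ}

def newtonPoint (c : (Fin n → ℤ) → ℝ) (I : Fin n → ℤ) : ℝ × (Fin n → ℝ) :=
  (c I, fun t => (I t : ℝ))

theorem newtonPoint_injective (c : (Fin n → ℤ) → ℝ) : Function.Injective (newtonPoint c) := by
  intro I J h
  funext t
  simpa [newtonPoint] using congrFun (congrArg Prod.snd h) t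

def newtonFunctional (x : Fin n → ℝ) : (ℝ × (Fin n → ℝ)) →ₗ[ℝ] ℝ where
  toFun r := r.1 + ∑ t, x t * r.2 t
  map_add' a b := by
    simp only [Prod.fst_add, Prod.snd_add, Pi.add_apply, mul_add, Finset.sum_add_distrib]
    ring
  map_smul' a r := by
    simp only [Prod.smul_fst, Prod.smul_snd, Pi.smul_apply, smul_eq_mul, RingHom.id_apply,
      mul_add, Finset.mul_sum]
    simp only [mul_left_comm]

theorem newtonFunctional_newtonPoint (c : (Fin n → ℤ) → ℝ) (x : Fin n → ℝ) (I : Fin n → ℤ) :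
    newtonFunctional x (newtonPoint c I) = c I + ∑ t, (I t : ℝ) * x t := by
  simp [newtonFunctional, newtonPoint, mul_comm]

variable {S : Finset (Fin n → ℤ)} {c : (Fin n → ℤ) → ℝ}

theorem newtonPoint_mem {I : Fin n → ℤ} (hI : I ∈ S) :
    newtonPoint c I ∈ NewtonPolyhedron n S c := by
  rw [← add_zero (newtonPoint c I)]
  exact Set.add_mem_add (subset_convexHull ℝ _ ⟨I, hI, rfl⟩) ⟨0, le_rfl, rfl⟩

theorem newtonFunctional_ray {x : Fin n → ℝ} {z : ℝ × (Fin n → ℝ)}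
    (hz : z ∈ {q : ℝ × (Fin n → ℝ) | ∃ t : ℝ, 0 ≤ t ∧ q = (t, 0)}) :
    0 ≤ newtonFunctional x z ∧ (z ≠ 0 → 0 < newtonFunctional x z) := by
  obtain ⟨t, ht, rfl⟩ := hz
  have : newtonFunctional x (t, 0) = t := by simp [newtonFunctional]
  rw [this]
  exact ⟨ht, fun h => ht.lt_of_ne (by rintro rfl; exact h rfl)⟩

theorem le_newtonFunctional {x : Fin n → ℝ} {a : ℝ}
    (h : ∀ I ∈ S, a ≤ newtonFunctional x (newtonPoint c I))
    {r : ℝ × (Fin n → ℝ)} (hr : r ∈ NewtonPolyhedron n S c) : a ≤ newtonFunctional x r :=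
  le_apply_of_mem_convexHull_add _ (by rintro _ ⟨I, hI, rfl⟩; exact h I hI)
    (fun _ hz => (newtonFunctional_ray hz).1) hr

theorem eq_newtonPoint_of_newtonFunctional_le {x : Fin n → ℝ} {J : Fin n → ℤ}
    (h : ∀ I ∈ S, I ≠ J →
      newtonFunctional x (newtonPoint c J) < newtonFunctional x (newtonPoint c I))
    {r : ℝ × (Fin n → ℝ)} (hr : r ∈ NewtonPolyhedron n S c)
    (hle : newtonFunctional x r ≤ newtonFunctional x (newtonPoint c J)) :
    r = newtonPoint c J := by
  refine eq_of_mem_convexHull_add_of_apply_le _ ?_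
    (fun _ hz => (newtonFunctional_ray hz).2) hr hle
  rintro _ ⟨I, hI, rfl⟩
  by_cases hIJ : I = J
  exacts [Or.inl (congrArg (newtonPoint c) hIJ), Or.inr (h I hI hIJ)]

end TropicalPolynomial

open TropicalPolynomial in
/-- Newton-polyhedron characterization of tropical zeros: `x ∈ ℝⁿ` is a tropical
zero of `f` iff the linear functional `(z₀, z) ↦ z₀ + ⟨x, z⟩` attains its minimum
over the extended Newton polyhedron `P(f)` at at least two distinct points. -/
theorem tropicalZero_iff_newtonPolyhedron
    (n : ℕ) (S : Finset (Fin n → ℤ)) (hS : S.Nonempty) (c : (Fin n → ℤ) → ℝ)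
    (x : Fin n → ℝ) :
    IsTropicalZero n S c x ↔
      ∃ p ∈ NewtonPolyhedron n S c, ∃ q ∈ NewtonPolyhedron n S c, p ≠ q ∧
        (∀ r ∈ NewtonPolyhedron n S c,
          p.1 + ∑ t, x t * p.2 t ≤ r.1 + ∑ t, x t * r.2 t) ∧
        p.1 + ∑ t, x t * p.2 t = q.1 + ∑ t, x t * q.2 t := by
  simp only [IsTropicalZero, ← newtonFunctional_newtonPoint]
  constructor
  · rintro ⟨I₁, hI₁, I₂, hI₂, hne, hmin, heq⟩
    exact ⟨newtonPoint c I₁, newtonPoint_mem hI₁, newtonPoint c I₂, newtonPoint_mem hI₂,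
      (newtonPoint_injective c).ne hne, fun r hr => le_newtonFunctional hmin hr, heq⟩
  · rintro ⟨p, hp, q, hq, hpq, hmin, heq⟩
    obtain ⟨J, hJ, hJmin⟩ :=
      S.exists_min_image (fun I => newtonFunctional x (newtonPoint c I)) hS
    by_contra hzero
    have hstrict : ∀ I ∈ S, I ≠ J →
        newtonFunctional x (newtonPoint c J) < newtonFunctional x (newtonPoint c I) := by
      intro I hI hIJ
      exact (hJmin I hI).lt_of_ne fun h => hzero ⟨J, hJ, I, hI, hIJ.symm, hJmin, h⟩
    have hpJ : newtonFunctional x p ≤ newtonFunctional x (newtonPoint c J) :=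
      hmin _ (newtonPoint_mem hJ)
    exact hpq ((eq_newtonPoint_of_newtonFunctional_le hstrict hp hpJ).trans
      (eq_newtonPoint_of_newtonFunctional_le hstrict hq (heq.symm.trans_le hpJ)).symm)
end

section
/- Passing to the convex form does not change tropical zeros: let f and f' be tropical polynomials in n variables, with exponent sets S, S' ⊆ ℤ^n and coefficients c : S → ℝ, c' : S' → ℝ respectively. If their extended Newton polyhedra coincide, i.e. convexHull{(c(I), I) : I ∈ S} + {(t, 0, …, 0) : t ≥ 0} = convexHull{(c'(I), I) : I ∈ S'} + {(t, 0, …, 0) : t ≥ 0} as subsets of ℝ^{n+1}, then f and f' have exactly the same tropical zeros in ℝ^n. -/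
open Pointwise

namespace TropAux

variable {n : ℕ}

/-- The evaluation linear functional. -/
def Lfun (x : Fin n → ℝ) (p : ℝ × (Fin n → ℝ)) : ℝ := p.1 + ∑ t, p.2 t * x t

lemma Lfun_linear (x : Fin n → ℝ) : IsLinearMap ℝ (Lfun x) := by
  constructor
  · intro p q
    simp only [Lfun, Prod.fst_add, Prod.snd_add, Pi.add_apply, add_mul,
      Finset.sum_add_distrib]
    ring
  · intro a p
    simp only [Lfun, Prod.smul_fst, Prod.smul_snd, Pi.smul_apply, smul_eq_mul,
      mul_assoc, ← Finset.mul_sum]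
    ring

/-- The vertex map. -/
def pt (c : (Fin n → ℤ) → ℝ) (I : Fin n → ℤ) : ℝ × (Fin n → ℝ) :=
  (c I, fun t => (I t : ℝ))

lemma pt_injective (c : (Fin n → ℤ) → ℝ) : Function.Injective (pt c) := by
  intro I J h
  have h2 := congrArg Prod.snd h
  funext t
  have := congrFun h2 t
  simp only [pt] at this
  exact_mod_cast this

lemma Lfun_pt (x : Fin n → ℝ) (c : (Fin n → ℤ) → ℝ) (I : Fin n → ℤ) :
    Lfun x (pt c I) = c I + ∑ t, (I t : ℝ) * x t := rfl

lemma setOf_eq (S : Finset (Fin n → ℤ)) (c : (Fin n → ℤ) → ℝ) :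
    {p : ℝ × (Fin n → ℝ) | ∃ I ∈ S, p = (c I, fun t => (I t : ℝ))} =
      ↑(S.image (pt c)) := by
  ext p
  simp only [Set.mem_setOf_eq, Finset.coe_image, Set.mem_image, Finset.mem_coe]
  constructor
  · rintro ⟨I, hI, rfl⟩; exact ⟨I, hI, rfl⟩
  · rintro ⟨I, hI, rfl⟩; exact ⟨I, hI, rfl⟩

lemma conv_lower {S : Finset (Fin n → ℤ)} {c : (Fin n → ℤ) → ℝ} {x : Fin n → ℝ}
    {m : ℝ} (hm : ∀ I ∈ S, m ≤ Lfun x (pt c I)) :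
    ∀ p ∈ convexHull ℝ {p : ℝ × (Fin n → ℝ) | ∃ I ∈ S, p = (c I, fun t => (I t : ℝ))},
      m ≤ Lfun x p := by
  intro p hp
  have : convexHull ℝ {p : ℝ × (Fin n → ℝ) | ∃ I ∈ S, p = (c I, fun t => (I t : ℝ))} ⊆
      {w | m ≤ Lfun x w} := by
    apply convexHull_min
    · rintro q ⟨I, hI, rfl⟩
      exact hm I hI
    · exact convex_halfSpace_ge (Lfun_linear x) m
  exact this hp

lemma np_lower {S : Finset (Fin n → ℤ)} {c : (Fin n → ℤ) → ℝ} {x : Fin n → ℝ}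
    {m : ℝ} (hm : ∀ I ∈ S, m ≤ Lfun x (pt c I)) :
    ∀ p ∈ NewtonPolyhedron n S c, m ≤ Lfun x p := by
  rintro p hp
  rw [NewtonPolyhedron, Set.mem_add] at hp
  obtain ⟨u, hu, r, ⟨t, ht, rfl⟩, rfl⟩ := hp
  have h1 : m ≤ Lfun x u := conv_lower hm u hu
  have h2 : Lfun x (u + (t, 0)) = Lfun x u + t := by
    rw [(Lfun_linear x).map_add]
    simp [Lfun]
  rw [h2]
  linarith

/-- If `p` is a point of the Newton polyhedron where the (globally minimal) value `m`
of `Lfun x` is attained, then `p` lies in the convex hull of the minimizing vertices;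
in particular, if the minimizer `I₀ ∈ S` is unique, `p = pt c I₀`. -/
lemma face_point {S : Finset (Fin n → ℤ)} {c : (Fin n → ℤ) → ℝ} {x : Fin n → ℝ}
    {m : ℝ} (hm : ∀ I ∈ S, m ≤ Lfun x (pt c I))
    {I₀ : Fin n → ℤ} (hI₀ : I₀ ∈ S)
    (huniq : ∀ I ∈ S, Lfun x (pt c I) = m → I = I₀)
    {p : ℝ × (Fin n → ℝ)} (hp : p ∈ NewtonPolyhedron n S c)
    (hLp : Lfun x p = m) : p = pt c I₀ := by
  rw [NewtonPolyhedron, Set.mem_add] at hp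
  obtain ⟨u, hu, r, ⟨t, ht, rfl⟩, rfl⟩ := hp
  have hlu : m ≤ Lfun x u := conv_lower hm u hu
  have h2 : Lfun x (u + (t, 0)) = Lfun x u + t := by
    rw [(Lfun_linear x).map_add]; simp [Lfun]
  have ht0 : t = 0 := by rw [h2] at hLp; linarith
  have hLu : Lfun x u = m := by rw [h2] at hLp; linarith
  have hpu : u + (t, 0) = u := by rw [ht0]; simp
  rw [hpu]
  -- now express u as a convex combination
  rw [setOf_eq, Finset.convexHull_eq] at hu
  obtain ⟨w, hw0, hw1, hcm⟩ := hu
  rw [Finset.centerMass_eq_of_sum_1 _ _ hw1] at hcm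
  -- every point with positive weight has Lfun value m, hence equals pt c I₀
  set T := S.image (pt c) with hT
  have hLsum : ∑ y ∈ T, w y * (Lfun x y - m) = 0 := by
    have : Lfun x u = ∑ y ∈ T, w y * Lfun x y := by
      rw [← hcm]
      have := map_sum (IsLinearMap.mk' _ (Lfun_linear x))
        (fun y => w y • (id y : ℝ × (Fin n → ℝ))) T
      simp only [IsLinearMap.mk'_apply, map_smul, smul_eq_mul, id_eq] at this
      exact this
    have expand : ∑ y ∈ T, w y * (Lfun x y - m) =
        (∑ y ∈ T, w y * Lfun x y) - (∑ y ∈ T, w y) * m := by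
      rw [Finset.sum_mul, ← Finset.sum_sub_distrib]
      congr 1; ext y; ring
    rw [expand, ← this, hw1, hLu]; ring
  have hterm : ∀ y ∈ T, w y ≠ 0 → y = pt c I₀ := by
    intro y hy hwy
    obtain ⟨I, hI, rfl⟩ := Finset.mem_image.mp hy
    have hLy : Lfun x (pt c I) = m := by
      have hnn : ∀ y ∈ T, 0 ≤ w y * (Lfun x y - m) := by
        intro y hy'
        obtain ⟨J, hJ, rfl⟩ := Finset.mem_image.mp hy'
        exact mul_nonneg (hw0 _ hy') (by linarith [hm J hJ])
      have := (Finset.sum_eq_zero_iff_of_nonneg hnn).mp hLsum _ hy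
      rcases mul_eq_zero.mp this with h | h
      · exact absurd h hwy
      · linarith
    rw [huniq I hI hLy]
  -- conclude u = pt c I₀
  calc u = ∑ y ∈ T, w y • (id y : ℝ × (Fin n → ℝ)) := hcm.symm
    _ = ∑ y ∈ T, w y • pt c I₀ := by
        apply Finset.sum_congr rfl
        intro y hy
        by_cases h : w y = 0
        · simp [h]
        · rw [hterm y hy h]; rfl
    _ = pt c I₀ := by rw [← Finset.sum_smul, hw1, one_smul]

/-- From two distinct points of the minimal face, extract a tropical zero. -/
lemma tropicalZero_of_face {S : Finset (Fin n → ℤ)} (hS : S.Nonempty)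
    {c : (Fin n → ℤ) → ℝ} {x : Fin n → ℝ} {m : ℝ}
    (hm : ∀ I ∈ S, m ≤ Lfun x (pt c I))
    {p q : ℝ × (Fin n → ℝ)} (hp : p ∈ NewtonPolyhedron n S c)
    (hq : q ∈ NewtonPolyhedron n S c) (hpq : p ≠ q)
    (hLp : Lfun x p = m) (hLq : Lfun x q = m)
    (hmem : ∃ I ∈ S, Lfun x (pt c I) = m) :
    IsTropicalZero n S c x := by
  obtain ⟨I₀, hI₀, hLI₀⟩ := hmem
  by_cases huniq : ∀ I ∈ S, Lfun x (pt c I) = m → I = I₀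
  · exact absurd ((face_point hm hI₀ huniq hp hLp).trans
      (face_point hm hI₀ huniq hq hLq).symm) hpq
  · push_neg at huniq
    obtain ⟨I₁, hI₁, hLI₁, hne⟩ := huniq
    refine ⟨I₁, hI₁, I₀, hI₀, hne, ?_, ?_⟩
    · intro I hI
      have h1 : m ≤ c I + ∑ t, (I t : ℝ) * x t := hm I hI
      have h2 : c I₁ + ∑ t, (I₁ t : ℝ) * x t = m := hLI₁
      linarith
    · have h1 : c I₁ + ∑ t, (I₁ t : ℝ) * x t = m := hLI₁
      have h2 : c I₀ + ∑ t, (I₀ t : ℝ) * x t = m := hLI₀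
      linarith

lemma pt_mem_np {S : Finset (Fin n → ℤ)} {c : (Fin n → ℤ) → ℝ} {I : Fin n → ℤ}
    (hI : I ∈ S) : pt c I ∈ NewtonPolyhedron n S c := by
  rw [NewtonPolyhedron, Set.mem_add]
  refine ⟨pt c I, subset_convexHull ℝ _ ⟨I, hI, rfl⟩, (0, 0), ⟨0, le_refl 0, rfl⟩, by simp⟩

end TropAux

open TropAux in
/-- Passing to the convex form does not change tropical zeros: if two tropical
polynomials `f, f'` in `n` variables have the same extended Newton polyhedron,
then they have exactly the same tropical zeros in `ℝⁿ`. -/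
theorem tropicalZeros_eq_of_newtonPolyhedron_eq
    (n : ℕ) (S S' : Finset (Fin n → ℤ)) (hS : S.Nonempty) (hS' : S'.Nonempty)
    (c c' : (Fin n → ℤ) → ℝ)
    (hP : NewtonPolyhedron n S c = NewtonPolyhedron n S' c') :
    ∀ x : Fin n → ℝ, IsTropicalZero n S c x ↔ IsTropicalZero n S' c' x := by
  -- a symmetric auxiliary claim
  have key : ∀ (S S' : Finset (Fin n → ℤ)), S.Nonempty → S'.Nonempty →
      ∀ (c c' : (Fin n → ℤ) → ℝ),
      NewtonPolyhedron n S c = NewtonPolyhedron n S' c' →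
      ∀ x : Fin n → ℝ, IsTropicalZero n S c x → IsTropicalZero n S' c' x := by
    intro S S' hS hS' c c' hP x hz
    obtain ⟨I₁, hI₁, I₂, hI₂, hne, hmin, heq⟩ := hz
    -- minimum over S
    set m : ℝ := Lfun x (pt c I₁) with hm_def
    have hmS : ∀ I ∈ S, m ≤ Lfun x (pt c I) := fun I hI => hmin I hI
    -- minimum over S'
    obtain ⟨J₀, hJ₀, hJ₀min⟩ := S'.exists_min_image (fun I => Lfun x (pt c' I)) hS'
    set m' : ℝ := Lfun x (pt c' J₀) with hm'_def
    have hmS' : ∀ I ∈ S', m' ≤ Lfun x (pt c' I) := fun I hI => hJ₀min I hI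
    -- m = m'
    have hmm' : m = m' := by
      have h1 : m' ≤ m := by
        have : pt c I₁ ∈ NewtonPolyhedron n S' c' := hP ▸ pt_mem_np hI₁
        exact np_lower hmS' _ this
      have h2 : m ≤ m' := by
        have : pt c' J₀ ∈ NewtonPolyhedron n S c := hP.symm ▸ pt_mem_np hJ₀
        exact np_lower hmS _ this
      linarith
    -- two distinct points on the minimal face of the common polyhedron
    have hp : pt c I₁ ∈ NewtonPolyhedron n S' c' := hP ▸ pt_mem_np hI₁
    have hq : pt c I₂ ∈ NewtonPolyhedron n S' c' := hP ▸ pt_mem_np hI₂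
    have hpq : pt c I₁ ≠ pt c I₂ := fun h => hne (pt_injective c h)
    have hLp : Lfun x (pt c I₁) = m' := by rw [← hmm']
    have hLq : Lfun x (pt c I₂) = m' := by
      rw [← hmm', hm_def, Lfun_pt, Lfun_pt]; exact heq.symm
    exact tropicalZero_of_face hS' hmS' hp hq hpq hLp hLq ⟨J₀, hJ₀, rfl⟩
  intro x
  exact ⟨key S S' hS hS' c c' hP x, key S' S hS' hS c' c hP.symm x⟩
end
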